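/- arXiv:1209.5486 — 5 statements merged into one kernel-verified Lean document; each statement's English description precedes it below -/
import Mathlib

section
/- If a topological space X is the disjoint union X = A₁ ⊔ A₂ of two nonempty open sets, with e₁ ∈ A₁ and e₂ ∈ A₂, then the free Graev topological group F_G(X,e₁) is isomorphic as a topological group to the free Markov topological group F_M(A₁ ∨ A₂), where A₁ ∨ A₂ = X/{e₁,e₂} is the wedge obtained by identifying e₁ and e₂. -/
universe u

/-- `σ : X → F` exhibits the topological group `F` as the free Markov topological group
on the space `X`. -/
structure IsFreeMarkov (X : Type u) [TopologicalSpace X]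
    (F : Type u) [Group F] [TopologicalSpace F] [IsTopologicalGroup F]
    (σ : C(X, F)) : Prop where
  lift : ∀ (G : Type u) [Group G] [TopologicalSpace G] [IsTopologicalGroup G]
    (f : C(X, G)), ∃! φ : F →* G, Continuous φ ∧ ∀ x, φ (σ x) = f x

/-- `σ : X → F` exhibits the topological group `F` as the free Graev topological group
on the pointed space `(X, x₀)`. -/
structure IsFreeGraev (X : Type u) [TopologicalSpace X] (x₀ : X)
    (F : Type u) [Group F] [TopologicalSpace F] [IsTopologicalGroup F]
    (σ : C(X, F)) : Prop where
  map_base : σ x₀ = 1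
  lift : ∀ (G : Type u) [Group G] [TopologicalSpace G] [IsTopologicalGroup G]
    (f : C(X, G)), f x₀ = 1 →
      ∃! φ : F →* G, Continuous φ ∧ ∀ x, φ (σ x) = f x

/-- The setoid on `X` identifying the two points `e₁` and `e₂`. -/
def wedgeSetoid {X : Type u} (e₁ e₂ : X) : Setoid X where
  r a b := a = b ∨ ((a = e₁ ∨ a = e₂) ∧ (b = e₁ ∨ b = e₂))
  iseqv := by
    constructor
    · exact fun a => Or.inl rfl
    · rintro a b (rfl | h)
      · exact Or.inl rfl
      · exact Or.inr ⟨h.2, h.1⟩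
    · rintro a b c (rfl | h) (rfl | h')
      · exact Or.inl rfl
      · exact Or.inr h'
      · exact Or.inr h
      · exact Or.inr ⟨h.1, h'.2⟩

/-! The two free groups are identified by twisting the generators on the clopen piece `A₁`:
`x ↦ x · e₂⁻¹` for `x ∈ A₁` sends `e₁` to the identity, as the Graev group requires, and
conversely `x ↦ x · e₂` on `A₁` makes `e₁` and `e₂` have the same image, so it descends to
the wedge. The two twists undo each other on generators, hence the induced continuous
homomorphisms are mutually inverse by uniqueness of lifts. -/

section FreeHomExt

variable {X F G : Type u} [TopologicalSpace X]
  [Group F] [TopologicalSpace F] [IsTopologicalGroup F]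
  [Group G] [TopologicalSpace G] [IsTopologicalGroup G]

theorem IsFreeMarkov.hom_ext {σ : C(X, F)} (h : IsFreeMarkov X F σ) {φ ψ : F →* G}
    (hφ : Continuous φ) (hψ : Continuous ψ) (heq : ∀ x, φ (σ x) = ψ (σ x)) : φ = ψ := by
  obtain ⟨θ, -, hθ⟩ := h.lift G ⟨fun x => ψ (σ x), hψ.comp σ.continuous⟩
  exact (hθ φ ⟨hφ, heq⟩).trans (hθ ψ ⟨hψ, fun _ => rfl⟩).symm

theorem IsFreeGraev.hom_ext {x₀ : X} {σ : C(X, F)} (h : IsFreeGraev X x₀ F σ) {φ ψ : F →* G}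
    (hφ : Continuous φ) (hψ : Continuous ψ) (heq : ∀ x, φ (σ x) = ψ (σ x)) : φ = ψ := by
  obtain ⟨θ, -, hθ⟩ := h.lift G ⟨fun x => ψ (σ x), hψ.comp σ.continuous⟩
    (by simp [h.map_base])
  exact (hθ φ ⟨hφ, heq⟩).trans (hθ ψ ⟨hψ, fun _ => rfl⟩).symm

end FreeHomExt

namespace ContinuousMap

variable {X G : Type*} [TopologicalSpace X] [TopologicalSpace G] [MulOneClass G] [ContinuousMul G]
  {A : Set X}

noncomputable def mulConstOn (f : C(X, G)) (hA : IsClopen A) (c : G) : C(X, G) where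
  toFun := f * A.mulIndicator fun _ => c
  continuous_toFun := f.continuous.mul (hA.continuous_mulIndicator continuous_const)

@[simp]
theorem mulConstOn_apply_of_mem (f : C(X, G)) (hA : IsClopen A) (c : G) {x : X} (hx : x ∈ A) :
    f.mulConstOn hA c x = f x * c := by
  simp [mulConstOn, hx]

@[simp]
theorem mulConstOn_apply_of_notMem (f : C(X, G)) (hA : IsClopen A) (c : G) {x : X}
    (hx : x ∉ A) : f.mulConstOn hA c x = f x := by
  simp [mulConstOn, hx]

end ContinuousMap

section Wedge

theorem wedgeSetoid_mk_eq {X : Type u} (e₁ e₂ : X) :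
    Quotient.mk (wedgeSetoid e₁ e₂) e₁ = Quotient.mk _ e₂ :=
  Quotient.sound (Or.inr ⟨Or.inl rfl, Or.inr rfl⟩)

variable {X : Type u} [TopologicalSpace X] {e₁ e₂ : X}

def wedgeMk (e₁ e₂ : X) : C(X, Quotient (wedgeSetoid e₁ e₂)) :=
  ⟨Quotient.mk _, continuous_quot_mk⟩

@[simp]
theorem wedgeMk_apply (x : X) : wedgeMk e₁ e₂ x = Quotient.mk _ x :=
  rfl

def wedgeLift {Y : Type*} [TopologicalSpace Y] (f : C(X, Y)) (h : f e₁ = f e₂) :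
    C(Quotient (wedgeSetoid e₁ e₂), Y) where
  toFun := Quotient.lift f <| by
    rintro a b (rfl | ⟨ha | rfl | rfl, hb | rfl | rfl⟩) <;> simp_all
  continuous_toFun := continuous_quot_lift _ f.continuous

@[simp]
theorem wedgeLift_mk {Y : Type*} [TopologicalSpace Y] (f : C(X, Y)) (h : f e₁ = f e₂) (x : X) :
    wedgeLift f h (Quotient.mk _ x) = f x :=
  rfl

end Wedge

theorem freeGraev_iso_freeMarkov_wedge_general {X F F' : Type u} [TopologicalSpace X]
    (A₁ A₂ : Set X) (hA₁ : IsOpen A₁) (hA₂ : IsOpen A₂)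
    (hdisj : Disjoint A₁ A₂) (hunion : A₁ ∪ A₂ = Set.univ)
    (e₁ e₂ : X) (he₁ : e₁ ∈ A₁) (he₂ : e₂ ∈ A₂)
    [Group F] [TopologicalSpace F] [IsTopologicalGroup F]
    [Group F'] [TopologicalSpace F'] [IsTopologicalGroup F']
    (σG : C(X, F)) (hG : IsFreeGraev X e₁ F σG)
    (σM : C(Quotient (wedgeSetoid e₁ e₂), F'))
    (hM : IsFreeMarkov (Quotient (wedgeSetoid e₁ e₂)) F' σM) :
    ∃ φ : F ≃* F', Continuous φ ∧ Continuous φ.symm := by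
  have hA : IsClopen A₁ := isClopen_of_disjoint_cover_open hunion.ge hA₁ hA₂ hdisj
  have he₂' : e₂ ∉ A₁ := hdisj.notMem_of_mem_right he₂
  obtain ⟨φ, ⟨hφc, hφ⟩, -⟩ := hG.lift F'
    ((σM.comp (wedgeMk e₁ e₂)).mulConstOn hA (σM (.mk _ e₂))⁻¹)
    (by simp [he₁, wedgeSetoid_mk_eq e₁ e₂])
  obtain ⟨ψ, ⟨hψc, hψ⟩, -⟩ := hM.lift F
    (wedgeLift (σG.mulConstOn hA (σG e₂)) (by simp [he₁, he₂', hG.map_base]))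
  have hψφ : ψ.comp φ = .id F := hG.hom_ext (hψc.comp hφc) continuous_id fun x => by
    by_cases hx : x ∈ A₁ <;> simp [hφ, hψ, hx, he₂']
  have hφψ : φ.comp ψ = .id F' := hM.hom_ext (hφc.comp hψc) continuous_id fun w => by
    induction w using Quotient.inductionOn with
    | h x => by_cases hx : x ∈ A₁ <;> simp [hφ, hψ, hx, he₂']
  exact ⟨φ.toMulEquiv ψ hψφ hφψ, hφc, hψc⟩

/-- If `X = A₁ ⊔ A₂` is the disjoint union of two nonempty open sets with `e₁ ∈ A₁`
and `e₂ ∈ A₂`, then the free Graev topological group `F_G(X, e₁)` is isomorphic as a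
topological group to the free Markov topological group on the wedge `A₁ ∨ A₂`,
the quotient of `X` identifying `e₁` and `e₂`. -/
theorem freeGraev_iso_freeMarkov_wedge {X F F' : Type u} [TopologicalSpace X]
    (A₁ A₂ : Set X) (hA₁ : IsOpen A₁) (hA₂ : IsOpen A₂)
    (hne₁ : A₁.Nonempty) (hne₂ : A₂.Nonempty)
    (hdisj : Disjoint A₁ A₂) (hunion : A₁ ∪ A₂ = Set.univ)
    (e₁ e₂ : X) (he₁ : e₁ ∈ A₁) (he₂ : e₂ ∈ A₂)
    [Group F] [TopologicalSpace F] [IsTopologicalGroup F]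
    [Group F'] [TopologicalSpace F'] [IsTopologicalGroup F']
    (σG : C(X, F)) (hG : IsFreeGraev X e₁ F σG)
    (σM : C(Quotient (wedgeSetoid e₁ e₂), F'))
    (hM : IsFreeMarkov (Quotient (wedgeSetoid e₁ e₂)) F' σM) :
    ∃ φ : F ≃* F', Continuous φ ∧ Continuous φ.symm :=
  freeGraev_iso_freeMarkov_wedge_general A₁ A₂ hA₁ hA₂ hdisj hunion e₁ e₂ he₁ he₂ σG hG σM hM
end

section
/- For a pointed topological space (X,*), the free Graev topological group F_G(X,*) is isomorphic as a topological group to the quotient topological group F_M(X)/N, where N is the normal closure of the element σ(*) in F_M(X). -/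
universe u

/-! The quotient `F_M(X) ⧸ N`, with `σ` followed by the projection, has the universal property
of `F_G(X, x₀)`: a continuous `f : X → G` with `f x₀ = 1` lifts to `F_M(X)`, the lift kills
`σ x₀` and hence `N`, and so factors continuously through the quotient topology; the factor is
unique because the projection is surjective. Universal objects being unique up to continuous
isomorphism, the theorem follows. -/

variable {X : Type u} [TopologicalSpace X]

def quotientBase {F : Type u} [Group F] [TopologicalSpace F] (σ : C(X, F)) (x₀ : X) :
    C(X, F ⧸ Subgroup.normalClosure {σ x₀}) :=
  ⟨fun x => QuotientGroup.mk (σ x), continuous_quot_mk.comp σ.continuous⟩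

variable {F : Type u} [Group F] [TopologicalSpace F] [IsTopologicalGroup F]
  {G : Type u} [Group G] [TopologicalSpace G] [IsTopologicalGroup G]

namespace IsFreeMarkov

variable {σ : C(X, F)}

theorem hom_ext_s6 (hF : IsFreeMarkov X F σ) {φ ψ : F →* G} (hφ : Continuous φ)
    (hψ : Continuous ψ) (h : ∀ x, φ (σ x) = ψ (σ x)) : φ = ψ :=
  (hF.lift G ⟨fun x => ψ (σ x), hψ.comp σ.continuous⟩).unique ⟨hφ, h⟩ ⟨hψ, fun _ => rfl⟩

theorem isFreeGraev_quotient (hF : IsFreeMarkov X F σ) (x₀ : X) :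
    IsFreeGraev X x₀ (F ⧸ Subgroup.normalClosure {σ x₀}) (quotientBase σ x₀) := by
  set N := Subgroup.normalClosure {σ x₀}
  refine ⟨(QuotientGroup.eq_one_iff _).mpr (Subgroup.subset_normalClosure rfl), ?_⟩
  intro H _ _ _ f hf
  obtain ⟨φ, ⟨hφc, hφ⟩, -⟩ := hF.lift H f
  have hN : N ≤ φ.ker :=
    Subgroup.normalClosure_le_normal (by simpa [Set.singleton_subset_iff, hφ] using hf)
  refine ⟨QuotientGroup.lift N φ hN,
    ⟨(QuotientGroup.isQuotientMap_mk N).continuous_iff.mpr hφc, hφ⟩, ?_⟩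
  rintro ψ ⟨hψc, hψ⟩
  refine QuotientGroup.monoidHom_ext N ?_
  rw [QuotientGroup.lift_comp_mk']
  exact hF.hom_ext_s6 (hψc.comp continuous_quot_mk) hφc fun x => (hψ x).trans (hφ x).symm

end IsFreeMarkov

namespace IsFreeGraev

variable {x₀ : X} {σ : C(X, F)}

theorem hom_ext_s6 (hF : IsFreeGraev X x₀ F σ) {φ ψ : F →* G} (hφ : Continuous φ)
    (hψ : Continuous ψ) (h : ∀ x, φ (σ x) = ψ (σ x)) : φ = ψ :=
  (hF.lift G ⟨fun x => ψ (σ x), hψ.comp σ.continuous⟩ (by simp [hF.map_base])).unique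
    ⟨hφ, h⟩ ⟨hψ, fun _ => rfl⟩

theorem nonempty_continuousMulEquiv {F' : Type u} [Group F'] [TopologicalSpace F']
    [IsTopologicalGroup F'] {σ' : C(X, F')} (hF : IsFreeGraev X x₀ F σ)
    (hF' : IsFreeGraev X x₀ F' σ') : Nonempty (F ≃ₜ* F') := by
  obtain ⟨φ, ⟨hφc, hφ⟩, -⟩ := hF.lift F' σ' hF'.map_base
  obtain ⟨ψ, ⟨hψc, hψ⟩, -⟩ := hF'.lift F σ hF.map_base
  have hψφ : ψ.comp φ = MonoidHom.id F :=
    hF.hom_ext_s6 (hψc.comp hφc) continuous_id fun x => by simp [hφ, hψ]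
  have hφψ : φ.comp ψ = MonoidHom.id F' :=
    hF'.hom_ext_s6 (hφc.comp hψc) continuous_id fun x => by simp [hφ, hψ]
  exact ⟨{ φ.toMulEquiv ψ hψφ hφψ with
    continuous_toFun := hφc
    continuous_invFun := hψc }⟩

end IsFreeGraev

/-- The free Graev topological group `F_G(X, x₀)` is isomorphic as a topological group
to the quotient topological group `F_M(X) / N`, where `N` is the normal closure of
`σ x₀` in the free Markov topological group `F_M(X)`. -/
theorem freeGraev_iso_quotient_freeMarkov {X F F' : Type u} [TopologicalSpace X]
    (x₀ : X)
    [Group F] [TopologicalSpace F] [IsTopologicalGroup F]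
    [Group F'] [TopologicalSpace F'] [IsTopologicalGroup F']
    (σM : C(X, F)) (hM : IsFreeMarkov X F σM)
    (σG : C(X, F')) (hG : IsFreeGraev X x₀ F' σG) :
    ∃ φ : F' ≃* F ⧸ Subgroup.normalClosure {σM x₀},
      Continuous φ ∧ Continuous φ.symm := by
  obtain ⟨e⟩ := hG.nonempty_continuousMulEquiv (hM.isFreeGraev_quotient x₀)
  exact ⟨e.toMulEquiv, e.continuous_toFun, e.continuous_invFun⟩
end

section
/- A topological space X is connected if and only if the free Graev topological group F_G(X,*) is connected. -/
/-!
The image `σ(X)` generates `F` as a group: the inclusion of the subgroup it generates lifts `σ`,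
and by uniqueness of lifts it splits the identity of `F`. If `X` is connected, `σ(X)` is a
connected set containing `1`, so it lies in the identity component, which is a subgroup, hence
everything. Conversely, if `F` is connected, every continuous homomorphism from `F` to a discrete
group is trivial, so every pointed map from `X` to a discrete group is trivial; applied to a
`Bool`-valued map this forces `X` to be connected.
-/

universe u

theorem connectedSpace_of_isPreconnected_of_closure_eq_top {G : Type*} [Group G]
    [TopologicalSpace G] [IsTopologicalGroup G] {S : Set G} (hS : IsPreconnected S)
    (h1 : (1 : G) ∈ S) (hgen : Subgroup.closure S = ⊤) : ConnectedSpace G := by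
  have hle : ⊤ ≤ Subgroup.connectedComponentOfOne G :=
    hgen ▸ (Subgroup.closure_le _).mpr (hS.subset_connectedComponent h1)
  exact connectedSpace_iff_connectedComponent.mpr
    ⟨1, Set.eq_univ_of_forall fun g => hle (Subgroup.mem_top g)⟩

theorem preconnectedSpace_of_forall_eq_one {X : Type*} [TopologicalSpace X] (x₀ : X)
    (G : Type*) [Group G] [TopologicalSpace G] [DiscreteTopology G] [Nontrivial G]
    (h : ∀ f : C(X, G), f x₀ = 1 → ∀ x, f x = 1) : PreconnectedSpace X := by
  obtain ⟨c, hc⟩ := exists_ne (1 : G)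
  refine preconnectedSpace_of_forall_constant fun b hb x y => ?_
  let f : C(X, G) :=
    ⟨(fun b' => if b' = b x₀ then 1 else c) ∘ b, continuous_of_discreteTopology.comp hb⟩
  have hbase : ∀ z, b z = b x₀ := fun z => by
    by_contra hne
    exact hc (by simpa [f, hne] using h f (by simp [f]) z)
  rw [hbase x, hbase y]

namespace IsFreeGraev

variable {X F : Type u} [TopologicalSpace X] {x₀ : X} [Group F] [TopologicalSpace F]
  [IsTopologicalGroup F] {σ : C(X, F)}

theorem hom_ext_s7 (h : IsFreeGraev X x₀ F σ) {G : Type u} [Group G] [TopologicalSpace G]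
    [IsTopologicalGroup G] {φ₁ φ₂ : F →* G} (hφ₁ : Continuous φ₁) (hφ₂ : Continuous φ₂)
    (hσ : ∀ x, φ₁ (σ x) = φ₂ (σ x)) : φ₁ = φ₂ :=
  (h.lift G ⟨φ₁ ∘ σ, hφ₁.comp σ.continuous⟩ (by simp [h.map_base])).unique
    ⟨hφ₁, fun _ => rfl⟩ ⟨hφ₂, fun x => (hσ x).symm⟩

theorem closure_range_eq_top (h : IsFreeGraev X x₀ F σ) :
    Subgroup.closure (Set.range σ) = ⊤ := by
  set H := Subgroup.closure (Set.range σ)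
  let σH : C(X, H) := ⟨fun x => ⟨σ x, Subgroup.subset_closure (Set.mem_range_self x)⟩,
    σ.continuous.subtype_mk _⟩
  obtain ⟨ψ, ⟨hψ, hψσ⟩, -⟩ := h.lift H σH (Subtype.ext h.map_base)
  have hsplit : H.subtype.comp ψ = MonoidHom.id F :=
    h.hom_ext_s7 (continuous_subtype_val.comp hψ) continuous_id
      fun x => congrArg Subtype.val (hψσ x)
  refine (Subgroup.eq_top_iff' _).mpr fun a => ?_
  rw [← MonoidHom.id_apply F a, ← hsplit]
  exact (ψ a).2

theorem eq_one_of_preconnectedSpace (h : IsFreeGraev X x₀ F σ) [PreconnectedSpace F]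
    {G : Type u} [Group G] [TopologicalSpace G] [IsTopologicalGroup G] [DiscreteTopology G]
    (f : C(X, G)) (hf : f x₀ = 1) (x : X) : f x = 1 := by
  obtain ⟨φ, ⟨hφ, hφσ⟩, -⟩ := h.lift G f hf
  rw [← hφσ x, ← map_one φ]
  exact PreconnectedSpace.constant inferInstance hφ

end IsFreeGraev

/-- A (nonempty) space `X` is connected if and only if the free Graev topological
group `F_G(X, x₀)` is connected. -/
theorem connected_iff_freeGraev_connected {X F : Type u} [TopologicalSpace X]
    (x₀ : X) [Group F] [TopologicalSpace F] [IsTopologicalGroup F]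
    (σ : C(X, F)) (h : IsFreeGraev X x₀ F σ) :
    ConnectedSpace X ↔ ConnectedSpace F := by
  constructor
  · intro _
    exact connectedSpace_of_isPreconnected_of_closure_eq_top (isPreconnected_range σ.continuous)
      ⟨x₀, h.map_base⟩ h.closure_range_eq_top
  · intro _
    have : PreconnectedSpace X :=
      preconnectedSpace_of_forall_eq_one x₀ (ULift.{u} (Multiplicative ℤ))
        h.eq_one_of_preconnectedSpace
    exact { toNonempty := ⟨x₀⟩ }
end

section
/- If F_G(X,*) is connected (equivalently, X is connected and nonempty), then F_G(X,*) is not isomorphic as a topological group to any free Markov topological group F_M(Y) on a nonempty space Y. -/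
universe u

/-! Every continuous homomorphism from a connected group to a discrete one is trivial, while a
free Markov group on a nonempty space maps onto `ℤ` by sending every generator to `1`. Connectedness
passes to continuous surjective images, so no connected group is isomorphic to a free Markov group. -/

theorem MonoidHom.eq_one_of_continuous_of_discreteTopology {G H : Type*} [Group G]
    [TopologicalSpace G] [PreconnectedSpace G] [Group H] [TopologicalSpace H]
    [DiscreteTopology H] (ψ : G →* H) (hψ : Continuous ψ) (g : G) : ψ g = 1 := by
  rw [PreconnectedSpace.constant ‹_› hψ (y := 1), map_one]

namespace IsFreeMarkov

variable {X F : Type u} [TopologicalSpace X] [Group F] [TopologicalSpace F]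
  [IsTopologicalGroup F] {σ : C(X, F)}

theorem exists_continuous_hom_to_int (hσ : IsFreeMarkov X F σ) :
    ∃ ψ : F →* ULift.{u} (Multiplicative ℤ), Continuous ψ ∧
      ∀ x, ψ (σ x) = ULift.up (Multiplicative.ofAdd 1) :=
  (hσ.lift _ (ContinuousMap.const X _)).exists

theorem not_preconnectedSpace [Nonempty X] (hσ : IsFreeMarkov X F σ) :
    ¬ PreconnectedSpace F := by
  intro hF
  obtain ⟨ψ, hψ, hψσ⟩ := hσ.exists_continuous_hom_to_int
  obtain ⟨x⟩ := ‹Nonempty X›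
  have h_one : ψ (σ x) = 1 := ψ.eq_one_of_continuous_of_discreteTopology hψ _
  rw [hψσ] at h_one
  exact one_ne_zero (congrArg (fun z => Multiplicative.toAdd z.down) h_one)

end IsFreeMarkov

theorem connected_freeGraev_not_freeMarkov_general {F : Type u}
    [Group F] [TopologicalSpace F]
    (hc : ConnectedSpace F) :
    ∀ (Y F' : Type u) [TopologicalSpace Y] [Nonempty Y]
      [Group F'] [TopologicalSpace F'] [IsTopologicalGroup F']
      (σ' : C(Y, F')), IsFreeMarkov Y F' σ' →
        ¬ ∃ φ : F ≃* F', Continuous φ ∧ Continuous φ.symm := by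
  rintro Y F' _ _ _ _ _ σ' hM ⟨φ, hφ, -⟩
  have : ConnectedSpace F' := φ.surjective.connectedSpace hφ
  exact hM.not_preconnectedSpace inferInstance

/-- If the free Graev topological group `F_G(X, x₀)` is connected, then it is not
isomorphic as a topological group to any free Markov topological group on a
nonempty space. -/
theorem connected_freeGraev_not_freeMarkov {X F : Type u} [TopologicalSpace X]
    (x₀ : X) [Group F] [TopologicalSpace F] [IsTopologicalGroup F]
    (σ : C(X, F)) (h : IsFreeGraev X x₀ F σ) (hc : ConnectedSpace F) :
    ∀ (Y F' : Type u) [TopologicalSpace Y] [Nonempty Y]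
      [Group F'] [TopologicalSpace F'] [IsTopologicalGroup F']
      (σ' : C(Y, F')), IsFreeMarkov Y F' σ' →
        ¬ ∃ φ : F ≃* F', Continuous φ ∧ Continuous φ.symm :=
  connected_freeGraev_not_freeMarkov_general hc
end

section
/- The free Markov topological group functor F_M: Top → TopGrp is left adjoint to the forgetful functor from topological groups to topological spaces. -/
universe u

open CategoryTheory

/-- The category of topological groups and continuous homomorphisms. -/
structure TopGrpCat : Type (u + 1) where
  carrier : Type u
  [group : Group carrier]
  [topology : TopologicalSpace carrier]
  [topGroup : IsTopologicalGroup carrier]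

attribute [instance] TopGrpCat.group TopGrpCat.topology TopGrpCat.topGroup

instance : Category TopGrpCat.{u} where
  Hom A B := ContinuousMonoidHom A.carrier B.carrier
  id A := ContinuousMonoidHom.id A.carrier
  comp f g := g.comp f
  id_comp f := rfl
  comp_id f := rfl
  assoc f g h := rfl

/-- The forgetful functor from topological groups to topological spaces. -/
def topGrpForget : TopGrpCat.{u} ⥤ TopCat.{u} where
  obj A := TopCat.of A.carrier
  map f := TopCat.ofHom f.toContinuousMap
  map_id A := by rfl
  map_comp f g := by rfl

/-! A homomorphism out of the free group is continuous for the coinduced group topology as soon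
as its restriction to `X` is continuous: the topology induced from a topological group is a
group topology, and the coinduced one is the infimum of all group topologies making
`FreeGroup.of` continuous. Hence `FreeGroup.lift` is a bijection between continuous maps
`X → G` and continuous homomorphisms `F_M(X) → G`, natural in `G`, which determines the left
adjoint. -/

open Topology

theorem GroupTopology.continuous_coinduced_of_continuous_comp {α G H : Type*}
    [TopologicalSpace α] [Group G] [Group H] [tH : TopologicalSpace H] [IsTopologicalGroup H]
    {f : α → G} (φ : G →* H) (hφ : Continuous (φ ∘ f)) :
    Continuous[(GroupTopology.coinduced f).toTopologicalSpace, tH] φ := by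
  let induced : GroupTopology G :=
    { toTopologicalSpace := tH.induced φ
      toIsTopologicalGroup := topologicalGroup_induced φ }
  have coinduced_le_induced : GroupTopology.coinduced f ≤ induced :=
    sInf_le (continuous_iff_coinduced_le.1 (continuous_induced_rng.2 hφ))
  exact continuous_iff_le_induced.2 (GroupTopology.toTopologicalSpace_le.2 coinduced_le_induced)

namespace FreeMarkov

variable (X : TopCat.{u})

def obj : TopGrpCat.{u} :=
  letI := (GroupTopology.coinduced (FreeGroup.of : X → FreeGroup X)).toTopologicalSpace
  haveI := (GroupTopology.coinduced (FreeGroup.of : X → FreeGroup X)).toIsTopologicalGroup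
  ⟨FreeGroup X⟩

def of : C(X, (obj X).carrier) :=
  ⟨FreeGroup.of, GroupTopology.coinduced_continuous _⟩

variable {X}

def lift {G : TopGrpCat.{u}} (f : C(X, G.carrier)) : obj X ⟶ G :=
  { toMonoidHom := FreeGroup.lift f
    continuous_toFun := GroupTopology.continuous_coinduced_of_continuous_comp _ <|
      f.continuous.congr fun _ => FreeGroup.lift_apply_of.symm }

theorem isFreeMarkov : IsFreeMarkov X (obj X).carrier (of X) where
  lift G _ _ _ f :=
    ⟨FreeGroup.lift f, ⟨(lift (G := ⟨G⟩) f).continuous, fun _ => FreeGroup.lift_apply_of⟩,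
      fun ψ hψ => FreeGroup.ext_hom ψ _ fun x => (hψ.2 x).trans FreeGroup.lift_apply_of.symm⟩

variable (X) in
def homEquiv (G : TopGrpCat.{u}) : (obj X ⟶ G) ≃ (X ⟶ topGrpForget.obj G) where
  toFun φ := TopCat.ofHom (φ.toContinuousMap.comp (of X))
  invFun f := lift f.hom
  left_inv _ := ContinuousMonoidHom.toMonoidHom_injective <|
    FreeGroup.ext_hom _ _ fun _ => FreeGroup.lift_apply_of
  right_inv _ := TopCat.ext fun _ => FreeGroup.lift_apply_of

def functor : TopCat.{u} ⥤ TopGrpCat.{u} :=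
  Adjunction.leftAdjointOfEquiv homEquiv fun _ _ _ _ _ => rfl

def adjunction : functor ⊣ topGrpForget :=
  Adjunction.adjunctionOfEquivLeft homEquiv fun _ _ _ _ _ => rfl

end FreeMarkov

/-- The free Markov topological group functor `Top ⥤ TopGrp` is left adjoint to the
forgetful functor from topological groups to topological spaces: there is a functor
`F` together with an adjunction `F ⊣ forget` whose unit exhibits each `F.obj X` as
the free Markov topological group on `X`. -/
theorem freeMarkov_left_adjoint_forget :
    ∃ (F : TopCat.{u} ⥤ TopGrpCat.{u}) (adj : F ⊣ topGrpForget.{u}),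
      ∀ X : TopCat.{u},
        IsFreeMarkov X (F.obj X).carrier
          (⟨fun x => adj.unit.app X x, (adj.unit.app X).hom.continuous⟩ : C(X, (F.obj X).carrier)) :=
  ⟨FreeMarkov.functor, FreeMarkov.adjunction, fun _ => FreeMarkov.isFreeMarkov⟩
end
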